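/- Let (φ,X,Y) be an instance of Π₂SAT and let I_φ be the IAF constructed from it as in the stated translation. Then (φ,X,Y)∈Π₂SAT if and only if (φ,φ)∈SRE⁺(I_φ+{(φ,w)}, ∅, (pr,true)). -/
import Mathlib


universe u

/-- An abstract argumentation framework: a set of arguments with an attack relation. -/
structure AF (α : Type u) where
  args : Set α
  att : Set (α × α)

namespace AF

variable {α : Type u}

/-- `S⁺_F`: arguments attacked by `S`. -/
def plusSet (F : AF α) (S : Set α) : Set α := {a | a ∈ F.args ∧ ∃ b ∈ S, (b, a) ∈ F.att}

/-- `S⁻_F`: arguments attacking `S`. -/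
def minusSet (F : AF α) (S : Set α) : Set α := {a | a ∈ F.args ∧ ∃ b ∈ S, (a, b) ∈ F.att}

/-- `S` is conflict-free in `F`. -/
def confFree (F : AF α) (S : Set α) : Prop := S ∩ F.plusSet S = ∅

/-- `S` defends `a` in `F`: every attacker of `a` is attacked by `S`. -/
def defends (F : AF α) (S : Set α) (a : α) : Prop := ∀ b, (b, a) ∈ F.att → b ∈ F.plusSet S

/-- The characteristic function `Γ_F(S)`: arguments defended by `S`. -/
def Γ (F : AF α) (S : Set α) : Set α := {a | a ∈ F.args ∧ F.defends S a}

/-- Admissible: conflict-free and self-defending. -/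
def isAd (F : AF α) (S : Set α) : Prop := S ⊆ F.args ∧ F.confFree S ∧ S ⊆ F.Γ S

/-- Stable: conflict-free and attacking exactly the outside. -/
def isSt (F : AF α) (S : Set α) : Prop := S ⊆ F.args ∧ F.confFree S ∧ F.plusSet S = F.args \ S

/-- Complete: admissible and containing all defended arguments. -/
def isCo (F : AF α) (S : Set α) : Prop := F.isAd S ∧ F.Γ S ⊆ S

/-- Grounded: ⊆-minimal complete. -/
def isGr (F : AF α) (S : Set α) : Prop := F.isCo S ∧ ∀ T, F.isCo T → T ⊆ S → T = S

/-- Preferred: ⊆-maximal admissible. -/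
def isPr (F : AF α) (S : Set α) : Prop := F.isAd S ∧ ∀ T, F.isAd T → S ⊆ T → S = T

end AF

/-- The five common semantics. -/
inductive Sem : Type
  | ad | st | co | gr | pr
deriving DecidableEq

/-- `S` is a `σ`-extension of `F`. -/
def extOf {α : Type u} : Sem → AF α → Set α → Prop
  | .ad => AF.isAd
  | .st => AF.isSt
  | .co => AF.isCo
  | .gr => AF.isGr
  | .pr => AF.isPr

/-- An incomplete argumentation framework (data part). -/
structure IAF (α : Type u) where
  A : Set α
  Aq : Set α
  R : Set (α × α)
  Rq : Set (α × α)

namespace IAF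

variable {α : Type u}

/-- Well-formedness: `A`,`A?` disjoint; `R`,`R?` disjoint subsets of `(A∪A?)×(A∪A?)`. -/
def WF (I : IAF α) : Prop :=
  Disjoint I.A I.Aq ∧ Disjoint I.R I.Rq ∧
  I.R ⊆ (I.A ∪ I.Aq) ×ˢ (I.A ∪ I.Aq) ∧
  I.Rq ⊆ (I.A ∪ I.Aq) ×ˢ (I.A ∪ I.Aq)

/-- `cert(I)`: the AF projected on the certain part. -/
def cert (I : IAF α) : AF α := ⟨I.A, I.R ∩ I.A ×ˢ I.A⟩

/-- `I'` is a partial completion of `I`. -/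
def PartOf (I' I : IAF α) : Prop :=
  I'.WF ∧ I.A ⊆ I'.A ∧ I'.A ⊆ I.A ∪ I.Aq ∧
  I.R ∩ (I'.A ∪ I'.Aq) ×ˢ (I'.A ∪ I'.Aq) ⊆ I'.R ∧
  I'.R ⊆ I.R ∪ I.Rq ∧ I'.Aq ⊆ I.Aq ∧ I'.Rq ⊆ I.Rq

/-- `F` is a completion of `I`. -/
def IsCompletion (I : IAF α) (F : AF α) : Prop := ∃ I' : IAF α, I'.PartOf I ∧ F = I'.cert

/-- `I + R₀` for a set of uncertain attacks. -/
def addR (I : IAF α) (R0 : Set (α × α)) : IAF α := ⟨I.A, I.Aq, I.R ∪ R0, I.Rq \ R0⟩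

/-- `I − R₀` for a set of uncertain attacks. -/
def subR (I : IAF α) (R0 : Set (α × α)) : IAF α := ⟨I.A, I.Aq, I.R, I.Rq \ R0⟩

/-- `I + A₀` for a set of uncertain arguments. -/
def addA (I : IAF α) (A0 : Set α) : IAF α := ⟨I.A ∪ A0, I.Aq \ A0, I.R, I.Rq⟩

/-- `I − A₀` for a set of uncertain arguments. -/
def subA (I : IAF α) (A0 : Set α) : IAF α :=
  ⟨I.A, I.Aq \ A0,
   I.R \ {p | p ∈ I.R ∪ I.Rq ∧ (p.1 ∈ A0 ∨ p.2 ∈ A0)},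
   I.Rq \ {p | p ∈ I.R ∪ I.Rq ∧ (p.1 ∈ A0 ∨ p.2 ∈ A0)}⟩

/-- `S⁺_I`. -/
def plusI (I : IAF α) (S : Set α) : Set α := {a | a ∈ I.A ∪ I.Aq ∧ ∃ b ∈ S, (b, a) ∈ I.R}

/-- `S⁻_I`. -/
def minusI (I : IAF α) (S : Set α) : Set α := {a | a ∈ I.A ∪ I.Aq ∧ ∃ b ∈ S, (a, b) ∈ I.R}

/-- `S^∼_I`. -/
def simI (I : IAF α) (S : Set α) : Set α :=
  {a | a ∈ I.A ∪ I.Aq ∧ ∀ b ∈ S, (b, a) ∉ I.R ∪ I.Rq}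

end IAF

/-- An element of an IAF: either an argument or an attack. -/
inductive Elem (α : Type u) : Type u
  | arg (a : α)
  | att (r : α × α)

/-- `e` is an uncertain element of `I`, i.e. `e ∈ A? ∪ R?`. -/
def IAF.isUnc {α : Type u} (I : IAF α) : Elem α → Prop
  | .arg a => a ∈ I.Aq
  | .att r => r ∈ I.Rq

/-- `I + {e}`. -/
def IAF.addE {α : Type u} (I : IAF α) : Elem α → IAF α
  | .arg a => I.addA {a}
  | .att r => I.addR {r}

/-- `I − {e}`. -/
def IAF.subE {α : Type u} (I : IAF α) : Elem α → IAF α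
  | .arg a => I.subA {a}
  | .att r => I.subR {r}

/-- `e` is the unique uncertain element of `I`, i.e. `A? ∪ R? = {e}`. -/
def onlyUnc {α : Type u} (I : IAF α) : Elem α → Prop
  | .arg a => I.Aq = {a} ∧ I.Rq = ∅
  | .att r => I.Aq = ∅ ∧ I.Rq = {r}

/-- A verification status: a semantics together with true/false. -/
abbrev VStatus := Sem × Bool

/-- `S` has verification status `j` in the AF `F`. -/
def hasStatus {α : Type u} (F : AF α) (S : Set α) (j : VStatus) : Prop :=
  cond j.2 (extOf j.1 F S) (¬ extOf j.1 F S)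

/-- `S` is stable-`j` w.r.t. `I`. -/
def IAF.stableJ {α : Type u} (I : IAF α) (S : Set α) (j : VStatus) : Prop :=
  ∀ F, I.IsCompletion F → hasStatus F S j

/-- `S` is stable-`σ` w.r.t. `I`. -/
def IAF.stableSem {α : Type u} (I : IAF α) (S : Set α) (σ : Sem) : Prop :=
  I.stableJ S (σ, true) ∨ I.stableJ S (σ, false)

/-- `RE⁺(I,S,j)`: uncertain elements whose addition is `j`-relevant for `S` w.r.t. `I`. -/
def REplus {α : Type u} (I : IAF α) (S : Set α) (j : VStatus) : Set (Elem α) :=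
  {e | I.isUnc e ∧ ∃ I' : IAF α, I'.PartOf I ∧ onlyUnc I' e ∧
    hasStatus (I'.addE e).cert S j ∧ ¬ hasStatus (I'.subE e).cert S j}

/-- `RE⁻(I,S,j)`: uncertain elements whose removal is `j`-relevant for `S` w.r.t. `I`. -/
def REminus {α : Type u} (I : IAF α) (S : Set α) (j : VStatus) : Set (Elem α) :=
  {e | I.isUnc e ∧ ∃ I' : IAF α, I'.PartOf I ∧ onlyUnc I' e ∧
    hasStatus (I'.subE e).cert S j ∧ ¬ hasStatus (I'.addE e).cert S j}

/-- `e` is `σ`-irrelevant for `S` w.r.t. `I`. -/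
def irrelevant {α : Type u} (I : IAF α) (S : Set α) (σ : Sem) (e : Elem α) : Prop :=
  e ∉ REplus I S (σ, true) ∧ e ∉ REminus I S (σ, true) ∧
  e ∉ REplus I S (σ, false) ∧ e ∉ REminus I S (σ, false)

/-- `PosVer_σ(I,S) = true`. -/
def PosVer {α : Type u} (σ : Sem) (I : IAF α) (S : Set α) : Prop :=
  ∃ F, I.IsCompletion F ∧ extOf σ F S

/-- `NecVer_σ(I,S) = true`. -/
def NecVer {α : Type u} (σ : Sem) (I : IAF α) (S : Set α) : Prop :=
  ∀ F, I.IsCompletion F → extOf σ F S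

/-- `SRE⁺(I,S,j)`: uncertain elements whose addition is strongly `j`-relevant. -/
def SREplus {α : Type u} (I : IAF α) (S : Set α) (j : VStatus) : Set (Elem α) :=
  {e | I.isUnc e ∧ ∀ I' : IAF α, I'.PartOf (I.subE e) → ¬ I'.stableJ S j}

/-- `SRE⁻(I,S,j)`: uncertain elements whose removal is strongly `j`-relevant. -/
def SREminus {α : Type u} (I : IAF α) (S : Set α) (j : VStatus) : Set (Elem α) :=
  {e | I.isUnc e ∧ ∀ I' : IAF α, I'.PartOf (I.addE e) → ¬ I'.stableJ S j}

/-- The `OutRel(I,S,(a,b))` predicate. -/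
def OutRel {α : Type u} (I : IAF α) (S : Set α) (r : α × α) : Prop :=
  (I.minusI {r.2} \ {r.1}) ∩ I.simI S = ∅ ∧
  PosVer Sem.co
    ((I.addR {p | p ∈ I.Rq ∧ p.1 ∈ S ∧ p.2 ∈ I.minusI {r.2} \ {r.1}}).subR
      {p | p ∈ I.Rq ∧ p.1 ≠ r.1 ∧ p.2 = r.2}) S


/-- Arguments of the IAF built from a `Π₂SAT` instance: literal arguments `pos v`/`neg v`,
clause arguments, the formula argument `phi`, and the auxiliary argument `w`. -/
inductive PArg (V C : Type u) : Type u
  | pos (v : V)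
  | neg (v : V)
  | cl (c : C)
  | phi
  | w

/-- The IAF `I_φ` constructed from a `Π₂SAT` instance `(φ,X,Y)`, where clauses are indexed
by `C` and `clauses c` is the set of literals (a literal is a variable with a sign) of
clause `c`. -/
def IAFofSAT {V C : Type u} (X Y : Set V) (clauses : C → Set (V × Bool)) :
    IAF (PArg V C) :=
  ⟨{a | (∃ v ∈ X, a = PArg.neg v) ∨ (∃ v ∈ Y, a = PArg.pos v ∨ a = PArg.neg v) ∨
        (∃ c : C, a = PArg.cl c) ∨ a = PArg.phi ∨ a = PArg.w},
   {a | ∃ v ∈ X, a = PArg.pos v},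
   {p | (∃ v ∈ X, p = (PArg.pos v, PArg.neg v)) ∨
        (∃ v ∈ Y, p = (PArg.pos v, PArg.neg v) ∨ p = (PArg.neg v, PArg.pos v)) ∨
        (∃ c : C, ∃ l ∈ clauses c,
          p = ((if l.2 then PArg.pos l.1 else PArg.neg l.1), PArg.cl c)) ∨
        (∃ c : C, p = (PArg.cl c, PArg.phi) ∨ p = (PArg.cl c, PArg.cl c)) ∨
        (∃ v ∈ X ∪ Y, p = (PArg.w, PArg.pos v) ∨ p = (PArg.w, PArg.neg v)) ∨
        p = (PArg.w, PArg.w)},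
   {(PArg.phi, PArg.phi), (PArg.phi, PArg.w)}⟩

/-- `(φ,X,Y) ∈ Π₂SAT`: for every assignment of `X` there is an extension to all variables
satisfying every clause. -/
def Pi2SAT {V C : Type u} (X : Set V) (clauses : C → Set (V × Bool)) : Prop :=
  ∀ τX : V → Bool, ∃ τ : V → Bool, (∀ v ∈ X, τ v = τX v) ∧
    ∀ c : C, ∃ l ∈ clauses c, τ l.1 = l.2


/-! ### Auxiliary lemmas -/

section GeneralAux

variable {α : Type u}

lemma partOf_refl_aux (I : IAF α) (h : I.WF) : I.PartOf I :=
  ⟨h, subset_rfl, Set.subset_union_left, Set.inter_subset_left, Set.subset_union_left,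
    subset_rfl, subset_rfl⟩

lemma cert_completion_aux (I : IAF α) (h : I.WF) : I.IsCompletion I.cert :=
  ⟨I, partOf_refl_aux I h, rfl⟩

lemma completion_frozen_aux (A : Set α) (R : Set (α × α)) (hR : R ⊆ A ×ˢ A) (F : AF α)
    (hF : (⟨A, ∅, R, ∅⟩ : IAF α).IsCompletion F) : F = ⟨A, R⟩ := by
  obtain ⟨I', ⟨hWF, h1, h2, h3, h4, h5, h6⟩, rfl⟩ := hF
  have hA : I'.A = A := le_antisymm (by simpa using h2) h1
  have hRsub : I'.R ⊆ R := by simpa using h4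
  have hRsup : R ⊆ I'.R := by
    intro p hp
    refine h3 ⟨hp, ?_⟩
    have := hR hp
    simp only [Set.mem_prod] at this ⊢
    exact ⟨Set.mem_union_left _ (hA ▸ this.1), Set.mem_union_left _ (hA ▸ this.2)⟩
  have hReq : I'.R = R := le_antisymm hRsub hRsup
  simp [IAF.cert, hA, hReq, Set.inter_eq_left.mpr hR]

lemma sre_char_aux (I : IAF α) (S : Set α) (j : VStatus) (e : Elem α) (hu : I.isUnc e) :
    e ∈ SREplus I S j ↔ ∀ F, (I.subE e).IsCompletion F → ¬ hasStatus F S j := by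
  constructor
  · rintro ⟨-, hall⟩ F ⟨I', hP, rfl⟩ hst
    obtain ⟨hWF, h1, h2, h3, h4, h5, h6⟩ := hP
    refine hall ⟨I'.A, ∅, I'.R ∩ I'.A ×ˢ I'.A, ∅⟩
      ⟨⟨Set.disjoint_empty _, by
          refine Set.disjoint_left.mpr fun p hp hp' => ?_
          exact absurd hp' (Set.notMem_empty p),
        by intro p hp; simpa using hp.2, by simp⟩,
        h1, h2,
        by
          intro p hp
          obtain ⟨hp1, hp2⟩ := hp
          simp only [Set.union_empty] at hp2
          refine ⟨h3 ⟨hp1, ?_⟩, hp2⟩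
          simp only [Set.mem_prod] at hp2 ⊢
          exact ⟨Set.mem_union_left _ hp2.1, Set.mem_union_left _ hp2.2⟩,
        fun p hp => h4 hp.1, by simp, by simp⟩
      (fun G hG => ?_)
    have hfroz := completion_frozen_aux I'.A (I'.R ∩ I'.A ×ˢ I'.A) Set.inter_subset_right G hG
    rw [hfroz]
    exact hst
  · intro h
    refine ⟨hu, fun I' hP hst => h I'.cert ⟨I', hP, rfl⟩ (hst I'.cert (cert_completion_aux I' hP.1))⟩

lemma completion_char_aux (J : IAF α) (hRq : J.Rq = ∅) (F : AF α) :
    J.IsCompletion F ↔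
      ∃ A0 ⊆ J.Aq, F = ⟨J.A ∪ A0, J.R ∩ (J.A ∪ A0) ×ˢ (J.A ∪ A0)⟩ := by
  constructor
  · rintro ⟨I', ⟨hWF, h1, h2, h3, h4, h5, h6⟩, rfl⟩
    refine ⟨I'.A \ J.A, ?_, ?_⟩
    · intro a ha
      rcases h2 ha.1 with h | h
      · exact absurd h ha.2
      · exact h
    · have hUA : J.A ∪ I'.A \ J.A = I'.A := Set.union_diff_cancel' subset_rfl h1
      have hRR : I'.R ∩ I'.A ×ˢ I'.A = J.R ∩ I'.A ×ˢ I'.A := by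
        apply le_antisymm
        · intro p hp
          rcases h4 hp.1 with h | h
          · exact ⟨h, hp.2⟩
          · rw [hRq] at h; exact absurd h (Set.notMem_empty p)
        · intro p hp
          refine ⟨h3 ⟨hp.1, ?_⟩, hp.2⟩
          have := hp.2
          simp only [Set.mem_prod] at this ⊢
          exact ⟨Set.mem_union_left _ this.1, Set.mem_union_left _ this.2⟩
      simp [IAF.cert, hUA, hRR]
  · rintro ⟨A0, hA0, rfl⟩
    refine ⟨⟨J.A ∪ A0, ∅, J.R ∩ (J.A ∪ A0) ×ˢ (J.A ∪ A0), ∅⟩,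
      ⟨⟨Set.disjoint_empty _, Set.disjoint_right.mpr (fun p hp => absurd hp (Set.notMem_empty p)),
        by intro p hp; simpa using hp.2, by simp⟩,
        Set.subset_union_left,
        Set.union_subset (Set.subset_union_left) (fun a ha => Set.mem_union_right _ (hA0 ha)),
        by intro p hp; simp only [Set.union_empty] at hp; exact hp,
        fun p hp => Set.mem_union_left _ hp.1, by simp, by simp⟩, ?_⟩
    simp [IAF.cert, Set.inter_assoc]

lemma empty_isAd_aux (F : AF α) : F.isAd ∅ := by
  refine ⟨Set.empty_subset _, ?_, Set.empty_subset _⟩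
  simp [AF.confFree]

lemma not_isPr_empty_aux (F : AF α) :
    ¬ F.isPr ∅ ↔ ∃ T, F.isAd T ∧ T.Nonempty := by
  constructor
  · intro h
    by_contra hno
    push_neg at hno
    exact h ⟨empty_isAd_aux F, fun T hT _ => (hno T hT).symm⟩
  · rintro ⟨T, hT, hne⟩ ⟨-, hmax⟩
    rcases hne with ⟨a, ha⟩
    have := hmax T hT (Set.empty_subset _)
    rw [← this] at ha
    exact absurd ha (Set.notMem_empty a)

end GeneralAux

section MainAux

variable {V C : Type u}

/-- The completion of `J` determined by the subset `A0` of uncertain arguments. -/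
def Fof (X Y : Set V) (clauses : C → Set (V × Bool)) (A0 : Set (PArg V C)) : AF (PArg V C) :=
  ⟨(IAFofSAT X Y clauses).A ∪ A0,
   ((IAFofSAT X Y clauses).R ∪ {(PArg.phi, PArg.w)}) ∩
     (((IAFofSAT X Y clauses).A ∪ A0) ×ˢ ((IAFofSAT X Y clauses).A ∪ A0))⟩

variable {X Y : Set V} {clauses : C → Set (V × Bool)} {A0 : Set (PArg V C)}

lemma phi_mem_args : PArg.phi ∈ (Fof X Y clauses A0).args :=
  Set.mem_union_left _ (Or.inr (Or.inr (Or.inr (Or.inl rfl))))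

lemma w_mem_args : PArg.w ∈ (Fof X Y clauses A0).args :=
  Set.mem_union_left _ (Or.inr (Or.inr (Or.inr (Or.inr rfl))))

lemma cl_mem_args (c : C) : PArg.cl c ∈ (Fof X Y clauses A0).args :=
  Set.mem_union_left _ (Or.inr (Or.inr (Or.inl ⟨c, rfl⟩)))

lemma neg_mem_args {v : V} (h : v ∈ X ∪ Y) : PArg.neg v ∈ (Fof X Y clauses A0).args := by
  rcases h with h | h
  · exact Set.mem_union_left _ (Or.inl ⟨v, h, rfl⟩)
  · exact Set.mem_union_left _ (Or.inr (Or.inl ⟨v, h, Or.inr rfl⟩))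

lemma pos_mem_args_iff {v : V} :
    PArg.pos v ∈ (Fof X Y clauses A0).args ↔ v ∈ Y ∨ PArg.pos v ∈ A0 := by
  constructor
  · intro h
    rcases h with h | h
    · rcases h with ⟨v', hv', he⟩ | ⟨v', hv', he | he⟩ | ⟨c, he⟩ | he | he
      · cases he
      · injection he with h'; subst h'; exact Or.inl hv'
      · cases he
      · cases he
      · cases he
      · cases he
    · exact Or.inr h
  · intro h
    rcases h with h | h
    · exact Set.mem_union_left _ (Or.inr (Or.inl ⟨v, h, Or.inl rfl⟩))
    · exact Set.mem_union_right _ h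

lemma neg_mem_args_only {v : V} (h : PArg.neg v ∈ (Fof X Y clauses A0).args)
    (hA0 : A0 ⊆ (IAFofSAT X Y clauses).Aq) : v ∈ X ∪ Y := by
  rcases h with h | h
  · rcases h with ⟨v', hv', he⟩ | ⟨v', hv', he | he⟩ | ⟨c, he⟩ | he | he
    · injection he with h'; subst h'; exact Or.inl hv'
    · cases he
    · injection he with h'; subst h'; exact Or.inr hv'
    · cases he
    · cases he
    · cases he
  · obtain ⟨v', -, he⟩ := hA0 h
    cases he

lemma posA0_mem_X {v : V} (h : PArg.pos v ∈ A0) (hA0 : A0 ⊆ (IAFofSAT X Y clauses).Aq) :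
    v ∈ X := by
  obtain ⟨v', hv', he⟩ := hA0 h
  injection he with h'
  subst h'
  exact hv'

lemma att_intro {p : PArg V C × PArg V C}
    (hR : p ∈ (IAFofSAT X Y clauses).R ∪ {(PArg.phi, PArg.w)})
    (h1 : p.1 ∈ (Fof X Y clauses A0).args) (h2 : p.2 ∈ (Fof X Y clauses A0).args) :
    p ∈ (Fof X Y clauses A0).att :=
  ⟨hR, Set.mem_prod.mpr ⟨h1, h2⟩⟩

lemma att_args {p : PArg V C × PArg V C} (h : p ∈ (Fof X Y clauses A0).att) :
    p.1 ∈ (Fof X Y clauses A0).args ∧ p.2 ∈ (Fof X Y clauses A0).args :=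
  ⟨h.2.1, h.2.2⟩

lemma att_R {p : PArg V C × PArg V C} (h : p ∈ (Fof X Y clauses A0).att) :
    p ∈ (IAFofSAT X Y clauses).R ∨ p = (PArg.phi, PArg.w) := by
  rcases h.1 with h' | h'
  · exact Or.inl h'
  · exact Or.inr h'

/-- Master case analysis for the certain attack relation, with the `if` resolved. -/
lemma R_cases {p : PArg V C × PArg V C} (h : p ∈ (IAFofSAT X Y clauses).R) :
    (∃ v ∈ X ∪ Y, p = (PArg.pos v, PArg.neg v)) ∨
    (∃ v ∈ Y, p = (PArg.neg v, PArg.pos v)) ∨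
    (∃ c, ∃ l ∈ clauses c, l.2 = true ∧ p = (PArg.pos l.1, PArg.cl c)) ∨
    (∃ c, ∃ l ∈ clauses c, l.2 = false ∧ p = (PArg.neg l.1, PArg.cl c)) ∨
    (∃ c, p = (PArg.cl c, PArg.phi)) ∨ (∃ c, p = (PArg.cl c, PArg.cl c)) ∨
    (∃ v ∈ X ∪ Y, p = (PArg.w, PArg.pos v)) ∨ (∃ v ∈ X ∪ Y, p = (PArg.w, PArg.neg v)) ∨
    p = (PArg.w, PArg.w) := by
  rcases h with ⟨v, hv, he⟩ | ⟨v, hv, he | he⟩ | ⟨c, l, hl, he⟩ | ⟨c, he | he⟩ |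
      ⟨v, hv, he | he⟩ | he
  · exact Or.inl ⟨v, Or.inl hv, he⟩
  · exact Or.inl ⟨v, Or.inr hv, he⟩
  · exact Or.inr (Or.inl ⟨v, hv, he⟩)
  · obtain ⟨lv, lb⟩ := l
    cases lb
    · simp only [Bool.false_eq_true, if_false] at he
      exact Or.inr (Or.inr (Or.inr (Or.inl ⟨c, (lv, false), hl, rfl, he⟩)))
    · simp only [if_true] at he
      exact Or.inr (Or.inr (Or.inl ⟨c, (lv, true), hl, rfl, he⟩))
  · exact Or.inr (Or.inr (Or.inr (Or.inr (Or.inl ⟨c, he⟩))))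
  · exact Or.inr (Or.inr (Or.inr (Or.inr (Or.inr (Or.inl ⟨c, he⟩)))))
  · exact Or.inr (Or.inr (Or.inr (Or.inr (Or.inr (Or.inr (Or.inl ⟨v, hv, he⟩))))))
  · exact Or.inr (Or.inr (Or.inr (Or.inr (Or.inr (Or.inr (Or.inr (Or.inl ⟨v, hv, he⟩)))))))
  · exact Or.inr (Or.inr (Or.inr (Or.inr (Or.inr (Or.inr (Or.inr (Or.inr he)))))))

lemma att_phi_w : (PArg.phi, PArg.w) ∈ (Fof X Y clauses A0).att :=
  att_intro (Set.mem_union_right _ rfl) phi_mem_args w_mem_args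

lemma att_cl_phi (c : C) : (PArg.cl c, PArg.phi) ∈ (Fof X Y clauses A0).att :=
  att_intro (Set.mem_union_left _ (Or.inr (Or.inr (Or.inr (Or.inl ⟨c, Or.inl rfl⟩)))))
    (cl_mem_args c) phi_mem_args

lemma att_cl_cl (c : C) : (PArg.cl c, PArg.cl c) ∈ (Fof X Y clauses A0).att :=
  att_intro (Set.mem_union_left _ (Or.inr (Or.inr (Or.inr (Or.inl ⟨c, Or.inr rfl⟩)))))
    (cl_mem_args c) (cl_mem_args c)

lemma att_w_w : (PArg.w, PArg.w) ∈ (Fof X Y clauses A0).att :=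
  att_intro (Set.mem_union_left _ (Or.inr (Or.inr (Or.inr (Or.inr (Or.inr rfl))))))
    w_mem_args w_mem_args

lemma att_w_pos {v : V} (h : v ∈ X ∪ Y) (ha : PArg.pos v ∈ (Fof X Y clauses A0).args) :
    (PArg.w, PArg.pos v) ∈ (Fof X Y clauses A0).att :=
  att_intro (Set.mem_union_left _
    (Or.inr (Or.inr (Or.inr (Or.inr (Or.inl ⟨v, h, Or.inl rfl⟩)))))) w_mem_args ha

lemma att_w_neg {v : V} (h : v ∈ X ∪ Y) (ha : PArg.neg v ∈ (Fof X Y clauses A0).args) :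
    (PArg.w, PArg.neg v) ∈ (Fof X Y clauses A0).att :=
  att_intro (Set.mem_union_left _
    (Or.inr (Or.inr (Or.inr (Or.inr (Or.inl ⟨v, h, Or.inr rfl⟩)))))) w_mem_args ha

lemma att_pos_neg {v : V} (h : v ∈ X ∪ Y) (ha : PArg.pos v ∈ (Fof X Y clauses A0).args) :
    (PArg.pos v, PArg.neg v) ∈ (Fof X Y clauses A0).att := by
  refine att_intro ?_ ha (neg_mem_args h)
  rcases h with h | h
  · exact Set.mem_union_left _ (Or.inl ⟨v, h, rfl⟩)
  · exact Set.mem_union_left _ (Or.inr (Or.inl ⟨v, h, Or.inl rfl⟩))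

lemma att_neg_pos {v : V} (h : v ∈ Y) (ha : PArg.pos v ∈ (Fof X Y clauses A0).args) :
    (PArg.neg v, PArg.pos v) ∈ (Fof X Y clauses A0).att :=
  att_intro (Set.mem_union_left _ (Or.inr (Or.inl ⟨v, h, Or.inr rfl⟩)))
    (neg_mem_args (Or.inr h)) ha

lemma att_lit_cl {c : C} {l : V × Bool} (hl : l ∈ clauses c)
    (ha : (if l.2 then PArg.pos l.1 else PArg.neg l.1) ∈ (Fof X Y clauses A0).args) :
    ((if l.2 then PArg.pos l.1 else PArg.neg l.1), PArg.cl c) ∈ (Fof X Y clauses A0).att :=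
  att_intro (Set.mem_union_left _ (Or.inr (Or.inr (Or.inl ⟨c, l, hl, rfl⟩))))
    ha (cl_mem_args c)

lemma attacker_phi {b : PArg V C} (h : (b, PArg.phi) ∈ (Fof X Y clauses A0).att) :
    ∃ c, b = PArg.cl c := by
  rcases att_R h with h' | h'
  · rcases R_cases h' with ⟨v, hv, he⟩ | ⟨v, hv, he⟩ | ⟨c, l, hl, hb, he⟩ |
        ⟨c, l, hl, hb, he⟩ | ⟨c, he⟩ | ⟨c, he⟩ | ⟨v, hv, he⟩ | ⟨v, hv, he⟩ | he <;>
      injection he with e1 e2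
    case _ => cases e2
    case _ => cases e2
    case _ => cases e2
    case _ => cases e2
    case _ => exact ⟨c, e1⟩
    case _ => cases e2
    case _ => cases e2
    case _ => cases e2
    case _ => cases e2
  · injection h' with e1 e2; cases e2

lemma attacker_w {b : PArg V C} (h : (b, PArg.w) ∈ (Fof X Y clauses A0).att) :
    b = PArg.phi ∨ b = PArg.w := by
  rcases att_R h with h' | h'
  · rcases R_cases h' with ⟨v, hv, he⟩ | ⟨v, hv, he⟩ | ⟨c, l, hl, hb, he⟩ |
        ⟨c, l, hl, hb, he⟩ | ⟨c, he⟩ | ⟨c, he⟩ | ⟨v, hv, he⟩ | ⟨v, hv, he⟩ | he <;>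
      injection he with e1 e2
    case _ => cases e2
    case _ => cases e2
    case _ => cases e2
    case _ => cases e2
    case _ => cases e2
    case _ => cases e2
    case _ => cases e2
    case _ => cases e2
    case _ => exact Or.inr e1
  · injection h' with e1 e2; exact Or.inl e1

lemma attacker_pos {b : PArg V C} {v : V}
    (h : (b, PArg.pos v) ∈ (Fof X Y clauses A0).att) :
    b = PArg.w ∨ (v ∈ Y ∧ b = PArg.neg v) := by
  rcases att_R h with h' | h'
  · rcases R_cases h' with ⟨v', hv', he⟩ | ⟨v', hv', he⟩ | ⟨c, l, hl, hb, he⟩ |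
        ⟨c, l, hl, hb, he⟩ | ⟨c, he⟩ | ⟨c, he⟩ | ⟨v', hv', he⟩ | ⟨v', hv', he⟩ | he <;>
      injection he with e1 e2
    case _ => cases e2
    case _ =>
      injection e2 with e3
      subst e3
      exact Or.inr ⟨hv', e1⟩
    case _ => cases e2
    case _ => cases e2
    case _ => cases e2
    case _ => cases e2
    case _ => exact Or.inl e1
    case _ => cases e2
    case _ => cases e2
  · injection h' with e1 e2; cases e2

lemma attacker_neg {b : PArg V C} {v : V}
    (h : (b, PArg.neg v) ∈ (Fof X Y clauses A0).att) :
    b = PArg.w ∨ b = PArg.pos v := by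
  rcases att_R h with h' | h'
  · rcases R_cases h' with ⟨v', hv', he⟩ | ⟨v', hv', he⟩ | ⟨c, l, hl, hb, he⟩ |
        ⟨c, l, hl, hb, he⟩ | ⟨c, he⟩ | ⟨c, he⟩ | ⟨v', hv', he⟩ | ⟨v', hv', he⟩ | he <;>
      injection he with e1 e2
    case _ =>
      injection e2 with e3
      subst e3
      exact Or.inr e1
    case _ => cases e2
    case _ => cases e2
    case _ => cases e2
    case _ => cases e2
    case _ => cases e2
    case _ => cases e2
    case _ => exact Or.inl e1
    case _ => cases e2
  · injection h' with e1 e2; cases e2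

lemma attacker_cl {b : PArg V C} {c : C}
    (h : (b, PArg.cl c) ∈ (Fof X Y clauses A0).att) :
    b = PArg.cl c ∨ ∃ l ∈ clauses c, b = (if l.2 then PArg.pos l.1 else PArg.neg l.1) := by
  rcases att_R h with h' | h'
  · rcases R_cases h' with ⟨v', hv', he⟩ | ⟨v', hv', he⟩ | ⟨c', l, hl, hb, he⟩ |
        ⟨c', l, hl, hb, he⟩ | ⟨c', he⟩ | ⟨c', he⟩ | ⟨v', hv', he⟩ | ⟨v', hv', he⟩ | he <;>
      injection he with e1 e2
    case _ => cases e2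
    case _ => cases e2
    case _ =>
      injection e2 with e3
      subst e3
      exact Or.inr ⟨l, hl, by rw [hb, if_pos rfl, e1]⟩
    case _ =>
      injection e2 with e3
      subst e3
      refine Or.inr ⟨l, hl, ?_⟩
      rw [hb]
      simpa using e1
    case _ => cases e2
    case _ =>
      injection e2 with e3
      subst e3
      exact Or.inl e1
    case _ => cases e2
    case _ => cases e2
    case _ => cases e2
  · injection h' with e1 e2; cases e2

lemma phi_attacks {a : PArg V C} (h : (PArg.phi, a) ∈ (Fof X Y clauses A0).att) :
    a = PArg.w := by
  rcases att_R h with h' | h'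
  · rcases R_cases h' with ⟨v', hv', he⟩ | ⟨v', hv', he⟩ | ⟨c', l, hl, hb, he⟩ |
        ⟨c', l, hl, hb, he⟩ | ⟨c', he⟩ | ⟨c', he⟩ | ⟨v', hv', he⟩ | ⟨v', hv', he⟩ | he
    all_goals injection he with e1 e2
    all_goals cases e1
  · injection h' with e1 e2 <;> exact e2

lemma pos_attacks {a : PArg V C} {v : V} (h : (PArg.pos v, a) ∈ (Fof X Y clauses A0).att) :
    a = PArg.neg v ∨ ∃ c, a = PArg.cl c := by
  rcases att_R h with h' | h'
  · rcases R_cases h' with ⟨v', hv', he⟩ | ⟨v', hv', he⟩ | ⟨c', l, hl, hb, he⟩ |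
        ⟨c', l, hl, hb, he⟩ | ⟨c', he⟩ | ⟨c', he⟩ | ⟨v', hv', he⟩ | ⟨v', hv', he⟩ | he <;>
      injection he with e1 e2
    case _ =>
      injection e1 with e3
      subst e3
      exact Or.inl e2
    case _ => cases e1
    case _ => exact Or.inr ⟨c', e2⟩
    case _ => cases e1
    case _ => cases e1
    case _ => cases e1
    case _ => cases e1
    case _ => cases e1
    case _ => cases e1
  · injection h' with e1 e2; cases e1

lemma neg_attacks {a : PArg V C} {v : V} (h : (PArg.neg v, a) ∈ (Fof X Y clauses A0).att) :
    a = PArg.pos v ∨ ∃ c, a = PArg.cl c := by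
  rcases att_R h with h' | h'
  · rcases R_cases h' with ⟨v', hv', he⟩ | ⟨v', hv', he⟩ | ⟨c', l, hl, hb, he⟩ |
        ⟨c', l, hl, hb, he⟩ | ⟨c', he⟩ | ⟨c', he⟩ | ⟨v', hv', he⟩ | ⟨v', hv', he⟩ | he <;>
      injection he with e1 e2
    case _ => cases e1
    case _ =>
      injection e1 with e3
      subst e3
      exact Or.inl e2
    case _ => cases e1
    case _ => exact Or.inr ⟨c', e2⟩
    case _ => cases e1
    case _ => cases e1
    case _ => cases e1
    case _ => cases e1
    case _ => cases e1
  · injection h' with e1 e2; cases e1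


/-- Core combinatorial equivalence: nonempty admissible sets in `Fof A0` correspond to
satisfying assignments compatible with `A0`. -/
lemma key_equiv (hXY : Disjoint X Y)
    (hlit : ∀ c : C, ∀ l ∈ clauses c, l.1 ∈ X ∪ Y)
    (hA0 : A0 ⊆ (IAFofSAT X Y clauses).Aq) :
    (∃ T, (Fof X Y clauses A0).isAd T ∧ T.Nonempty) ↔
      ∃ τ : V → Bool, (∀ x ∈ X, (τ x = true ↔ PArg.pos x ∈ A0)) ∧
        ∀ c : C, ∃ l ∈ clauses c, τ l.1 = l.2 := by
  classical
  constructor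
  · rintro ⟨T, ⟨hTargs, hcf, hdefT⟩, a0, ha0⟩
    have hcf' : ∀ a ∈ T, ∀ b ∈ T, (b, a) ∉ (Fof X Y clauses A0).att := by
      intro a ha b hb hatt
      have : a ∈ T ∩ (Fof X Y clauses A0).plusSet T := ⟨ha, ⟨hTargs ha, ⟨b, hb, hatt⟩⟩⟩
      rw [hcf] at this
      exact this
    have hdef : ∀ a ∈ T, ∀ b, (b, a) ∈ (Fof X Y clauses A0).att →
        ∃ d ∈ T, (d, b) ∈ (Fof X Y clauses A0).att := by
      intro a ha b hatt
      obtain ⟨-, hd⟩ := hdefT ha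
      obtain ⟨-, d, hd1, hd2⟩ := hd b hatt
      exact ⟨d, hd1, hd2⟩
    have hwT : PArg.w ∉ T := fun h => hcf' _ h _ h att_w_w
    have hclT : ∀ c : C, PArg.cl c ∉ T := fun c h => hcf' _ h _ h (att_cl_cl c)
    have step : ∀ a ∈ T, (PArg.w, a) ∈ (Fof X Y clauses A0).att → PArg.phi ∈ T := by
      intro a ha hw
      obtain ⟨d, hdT, hd⟩ := hdef a ha PArg.w hw
      rcases attacker_w hd with rfl | rfl
      · exact hdT
      · exact absurd hdT hwT
    have hphiT : PArg.phi ∈ T := by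
      rcases a0 with v | v | c | _ | _
      · have hargs := hTargs ha0
        have hv : v ∈ X ∪ Y := by
          rcases pos_mem_args_iff.mp hargs with h | h
          · exact Or.inr h
          · exact Or.inl (posA0_mem_X h hA0)
        exact step _ ha0 (att_w_pos hv hargs)
      · have hv := neg_mem_args_only (hTargs ha0) hA0
        exact step _ ha0 (att_w_neg hv (hTargs ha0))
      · exact absurd ha0 (hclT c)
      · exact ha0
      · exact absurd ha0 hwT
    have hclause : ∀ c : C, ∃ l ∈ clauses c,
        (if l.2 then PArg.pos l.1 else PArg.neg l.1) ∈ T := by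
      intro c
      obtain ⟨d, hdT, hd⟩ := hdef PArg.phi hphiT (PArg.cl c) (att_cl_phi c)
      rcases attacker_cl hd with rfl | ⟨l, hl, rfl⟩
      · exact absurd hdT (hclT c)
      · exact ⟨l, hl, hdT⟩
    refine ⟨fun v => if v ∈ X then decide (PArg.pos v ∈ A0) else decide (PArg.pos v ∈ T),
      fun x hx => by simp only [if_pos hx, decide_eq_true_eq], fun c => ?_⟩
    obtain ⟨l, hl, hlT⟩ := hclause c
    refine ⟨l, hl, ?_⟩
    rcases hb : l.2 with _ | _ <;> rw [hb] at hlT <;> simp only [if_true, Bool.false_eq_true,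
      if_false] at hlT
    · by_cases hx : l.1 ∈ X
      · simp only [if_pos hx, decide_eq_false_iff_not]
        intro hposA0
        have hposargs : PArg.pos l.1 ∈ (Fof X Y clauses A0).args :=
          pos_mem_args_iff.mpr (Or.inr hposA0)
        have hatt := att_pos_neg (Or.inl hx) hposargs
        obtain ⟨d, hdT, hd⟩ := hdef _ hlT _ hatt
        rcases attacker_pos hd with rfl | ⟨hY, rfl⟩
        · exact hwT hdT
        · exact absurd hY (Set.disjoint_left.mp hXY hx)
      · simp only [if_neg hx, decide_eq_false_iff_not]
        intro hposT
        have hv : l.1 ∈ X ∪ Y := hlit c l hl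
        exact hcf' _ hlT _ hposT (att_pos_neg hv (hTargs hposT))
    · by_cases hx : l.1 ∈ X
      · simp only [if_pos hx, decide_eq_true_eq]
        rcases pos_mem_args_iff.mp (hTargs hlT) with h | h
        · exact absurd h (Set.disjoint_left.mp hXY hx)
        · exact h
      · simp only [if_neg hx, decide_eq_true_eq]
        exact hlT
  · rintro ⟨τ, hX', hsat⟩
    set S : Set (PArg V C) :=
      {PArg.phi} ∪ {a | ∃ v ∈ X ∪ Y, (τ v = true ∧ a = PArg.pos v) ∨
        (τ v = false ∧ a = PArg.neg v)} with hS
    have hphiS : PArg.phi ∈ S := Or.inl rfl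
    have hposS : ∀ v ∈ X ∪ Y, τ v = true → PArg.pos v ∈ S := by
      intro v hv ht
      exact Or.inr ⟨v, hv, Or.inl ⟨ht, rfl⟩⟩
    have hnegS : ∀ v ∈ X ∪ Y, τ v = false → PArg.neg v ∈ S := by
      intro v hv ht
      exact Or.inr ⟨v, hv, Or.inr ⟨ht, rfl⟩⟩
    have hSargs : S ⊆ (Fof X Y clauses A0).args := by
      rintro a (rfl | ⟨v, hv, ⟨ht, rfl⟩ | ⟨ht, rfl⟩⟩)
      · exact phi_mem_args
      · rcases hv with hv' | hv'
        · exact pos_mem_args_iff.mpr (Or.inr ((hX' v hv').mp ht))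
        · exact pos_mem_args_iff.mpr (Or.inl hv')
      · exact neg_mem_args hv
    have hwS : PArg.w ∉ S := by
      rintro (h | ⟨v, hv, ⟨ht, h⟩ | ⟨ht, h⟩⟩) <;> cases h
    have hclS : ∀ c : C, PArg.cl c ∉ S := by
      rintro c (h | ⟨v, hv, ⟨ht, h⟩ | ⟨ht, h⟩⟩) <;> cases h
    have hposS' : ∀ v, PArg.pos v ∈ S → τ v = true := by
      rintro v (h | ⟨v', hv', ⟨ht, h⟩ | ⟨ht, h⟩⟩)
      · cases h
      · injection h with h'; subst h'; exact ht
      · cases h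
    have hnegS' : ∀ v, PArg.neg v ∈ S → τ v = false := by
      rintro v (h | ⟨v', hv', ⟨ht, h⟩ | ⟨ht, h⟩⟩)
      · cases h
      · cases h
      · injection h with h'; subst h'; exact ht
    refine ⟨S, ⟨hSargs, ?_, ?_⟩, PArg.phi, hphiS⟩
    · rw [AF.confFree, Set.eq_empty_iff_forall_notMem]
      rintro a ⟨haS, -, b, hbS, hatt⟩
      rcases hbS with rfl | ⟨v, hv, ⟨ht, rfl⟩ | ⟨ht, rfl⟩⟩
      · rw [phi_attacks hatt] at haS
        exact hwS haS
      · rcases pos_attacks hatt with rfl | ⟨c, rfl⟩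
        · rw [hnegS' v haS] at ht; cases ht
        · exact hclS c haS
      · rcases neg_attacks hatt with rfl | ⟨c, rfl⟩
        · rw [hposS' v haS] at ht; cases ht
        · exact hclS c haS
    · intro a haS
      refine ⟨hSargs haS, fun b hb => ?_⟩
      have hbargs : b ∈ (Fof X Y clauses A0).args := (att_args hb).1
      rcases haS with rfl | ⟨v, hv, ⟨ht, rfl⟩ | ⟨ht, rfl⟩⟩
      · obtain ⟨c, rfl⟩ := attacker_phi hb
        obtain ⟨l, hl, hlτ⟩ := hsat c
        have hvl := hlit c l hl
        have hlS : (if l.2 then PArg.pos l.1 else PArg.neg l.1) ∈ S := by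
          rcases hb2 : l.2 with _ | _ <;> rw [hb2] at hlτ
          · exact hnegS l.1 hvl hlτ
          · exact hposS l.1 hvl hlτ
        exact ⟨hbargs, _, hlS, att_lit_cl hl (hSargs hlS)⟩
      · rcases attacker_pos hb with rfl | ⟨hY, rfl⟩
        · exact ⟨hbargs, PArg.phi, hphiS, att_phi_w⟩
        · refine ⟨hbargs, PArg.pos v, hposS v hv ht, ?_⟩
          exact att_pos_neg hv (hSargs (hposS v hv ht))
      · rcases attacker_neg hb with rfl | rfl
        · exact ⟨hbargs, PArg.phi, hphiS, att_phi_w⟩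
        · rcases pos_mem_args_iff.mp hbargs with hY | hA0'
          · exact ⟨hbargs, PArg.neg v, hnegS v hv ht, att_neg_pos hY hbargs⟩
          · have hx : v ∈ X := posA0_mem_X hA0' hA0
            rw [(hX' v hx).mpr hA0'] at ht
            cases ht

end MainAux

/-- `(φ,X,Y) ∈ Π₂SAT` iff addition of `(φ,φ)` is strongly `(pr,true)`-relevant
for `∅` w.r.t. `I_φ + {(φ,w)}`. -/
theorem stmt16 {V C : Type u} [Finite C] (X Y : Set V)
    (clauses : C → Set (V × Bool))
    (hXY : Disjoint X Y) (hXfin : X.Finite) (hYfin : Y.Finite)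
    (hlit : ∀ c : C, ∀ l ∈ clauses c, l.1 ∈ X ∪ Y) :
    Pi2SAT X clauses ↔
      Elem.att (PArg.phi, PArg.phi) ∈
        SREplus ((IAFofSAT X Y clauses).addR {(PArg.phi, PArg.w)}) ∅
          (Sem.pr, true) := by
  classical
  have hunc : ((IAFofSAT X Y clauses).addR {(PArg.phi, PArg.w)}).isUnc
      (Elem.att (PArg.phi, PArg.phi)) := by
    simp [IAF.isUnc, IAF.addR, IAFofSAT]
  rw [sre_char_aux _ _ _ _ hunc]
  have hRq : (((IAFofSAT X Y clauses).addR {(PArg.phi, PArg.w)}).subE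
      (Elem.att (PArg.phi, PArg.phi))).Rq = ∅ := by
    ext p
    simp only [IAF.subE, IAF.subR, IAF.addR, IAFofSAT, Set.mem_diff, Set.mem_insert_iff,
      Set.mem_singleton_iff, Set.mem_empty_iff_false, iff_false]
    rintro ⟨⟨h1 | h1, h2⟩, h3⟩
    · exact h3 h1
    · exact h2 h1
  constructor
  · intro hpi F hF hst
    rw [completion_char_aux _ hRq] at hF
    obtain ⟨A0, hA0, rfl⟩ := hF
    have hst' : (Fof X Y clauses A0).isPr ∅ := hst
    obtain ⟨τ, hagree, hsat⟩ := hpi (fun v => decide (PArg.pos v ∈ A0))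
    have hne : ∃ T, (Fof X Y clauses A0).isAd T ∧ T.Nonempty := by
      refine (key_equiv hXY hlit hA0).mpr ⟨τ, fun x hx => ?_, hsat⟩
      rw [hagree x hx, decide_eq_true_eq]
    exact (not_isPr_empty_aux _).mpr hne hst'
  · intro hall τX
    set A0 : Set (PArg V C) := {a | ∃ x ∈ X, τX x = true ∧ a = PArg.pos x} with hA0def
    have hA0 : A0 ⊆ (IAFofSAT X Y clauses).Aq := by
      rintro a ⟨x, hx, ht, rfl⟩
      exact ⟨x, hx, rfl⟩
    have hF : (((IAFofSAT X Y clauses).addR {(PArg.phi, PArg.w)}).subE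
        (Elem.att (PArg.phi, PArg.phi))).IsCompletion (Fof X Y clauses A0) :=
      (completion_char_aux _ hRq _).mpr ⟨A0, hA0, rfl⟩
    have hnot : ¬ (Fof X Y clauses A0).isPr ∅ := hall _ hF
    obtain ⟨T, hT, hne⟩ := (not_isPr_empty_aux _).mp hnot
    obtain ⟨τ, hiff, hsat⟩ := (key_equiv hXY hlit hA0).mp ⟨T, hT, hne⟩
    refine ⟨τ, fun v hv => ?_, hsat⟩
    have h1 : τ v = true ↔ τX v = true := by
      rw [hiff v hv]
      constructor
      · rintro ⟨x, hx, ht, he⟩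
        injection he with h'
        subst h'
        exact ht
      · intro ht
        exact ⟨v, hv, ht, rfl⟩
    cases hτ : τ v <;> cases hτX : τX v <;> simp_all
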